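/- For every r ≥ r_* one has 3Mr³ − (8M² + 4Q²)r² + 15MQ²r − 6Q⁴ > 0. Equivalently, setting w(r) = (2/r)·Υ(r), for all r ≥ r_* the identity −d/dr( r²·Υ(r)·w'(r) ) = (4/r⁵)·( 3Mr³ − (8M² + 4Q²)r² + 15MQ²r − 6Q⁴ ) holds and this quantity is strictly positive. -/

import Mathlib

noncomputable section

/-- The Reissner–Nordström lapse function `Υ(r) = 1 - 2M/r + Q²/r²`. -/
def Upsilon (M Q r : ℝ) : ℝ := 1 - 2*M/r + Q^2/r^2

/-- The radius `r_* = 2M + √(4M² - 3Q²)`. -/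
def rstar (M Q : ℝ) : ℝ := 2*M + Real.sqrt (4*M^2 - 3*Q^2)

/-- The weight `w(r) = (2/r)·Υ(r)`. -/
def wfull (M Q : ℝ) (r : ℝ) : ℝ := (2 / r) * Upsilon M Q r

/-!
Beyond the photon sphere `r = 3M` the cubic is positive: expanded in powers of `x = r - 3M`
all of its coefficients are nonnegative and the constant term `9M⁴ + 9M²Q² - 6Q⁴` is positive
as soon as `Q² ≤ M²`. Since `√(4M² - 3Q²) ≥ M`, the radius `r_*` lies beyond `3M`.
The derivative identity is a direct computation: `r² Υ w'` is a polynomial in `1/r`.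
-/

lemma three_mul_le_rstar {M Q : ℝ} (hQM : Q^2 ≤ M^2) : 3*M ≤ rstar M Q := by
  have : M ≤ Real.sqrt (4*M^2 - 3*Q^2) := Real.le_sqrt_of_sq_le (by linarith)
  unfold rstar
  linarith

lemma cubic_pos_of_three_mul_le {M Q r : ℝ} (hM : 0 < M) (hQM : Q^2 ≤ M^2) (hr : 3*M ≤ r) :
    0 < 3*M*r^3 - (8*M^2 + 4*Q^2)*r^2 + 15*M*Q^2*r - 6*Q^4 := by
  obtain ⟨x, hx, rfl⟩ : ∃ x, 0 ≤ x ∧ r = 3*M + x := ⟨r - 3*M, by linarith, by ring⟩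
  have h3 : 0 ≤ 3*M*x^3 := by positivity
  have h2 : 0 ≤ (19*M^2 - 4*Q^2)*x^2 := mul_nonneg (by nlinarith) (sq_nonneg x)
  have h1 : 0 ≤ (33*M^3 - 9*M*Q^2)*x := mul_nonneg (by nlinarith) hx
  have h0 : 0 < 9*M^4 + 9*M^2*Q^2 - 6*Q^4 := by nlinarith [sq_nonneg Q, pow_pos hM 4]
  linear_combination h3 + h2 + h1 + h0

lemma hasDerivAt_const_div_pow (c : ℝ) (n : ℕ) {r : ℝ} (hr : r ≠ 0) :
    HasDerivAt (fun s => c / s^n) (-(n * c) / r^(n+1)) r := by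
  refine ((hasDerivAt_const r c).div (hasDerivAt_pow n r) (pow_ne_zero n hr)).congr_deriv ?_
  rcases n with _ | n
  · simp
  · rw [Nat.add_sub_cancel]
    field_simp
    ring

lemma hasDerivAt_wfull (M Q : ℝ) {s : ℝ} (hs : s ≠ 0) :
    HasDerivAt (wfull M Q) (-2/s^2 + 8*M/s^3 - 6*Q^2/s^4) s := by
  have hw : wfull M Q = fun t => 2/t^1 - 4*M/t^2 + 2*Q^2/t^3 := by
    funext t
    unfold wfull Upsilon
    ring
  rw [hw]
  refine (((hasDerivAt_const_div_pow 2 1 hs).sub (hasDerivAt_const_div_pow (4*M) 2 hs)).add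
    (hasDerivAt_const_div_pow (2*Q^2) 3 hs)).congr_deriv ?_
  field_simp
  ring

lemma sq_mul_Upsilon_mul_deriv_wfull {M Q s : ℝ} (hs : s ≠ 0) :
    s^2 * Upsilon M Q s * deriv (wfull M Q) s
      = -2 + 12*M/s^1 - (16*M^2 + 8*Q^2)/s^2 + 20*M*Q^2/s^3 - 6*Q^4/s^4 := by
  rw [(hasDerivAt_wfull M Q hs).deriv]
  unfold Upsilon
  field_simp
  ring

lemma hasDerivAt_sq_mul_Upsilon_mul_deriv_wfull (M Q : ℝ) {r : ℝ} (hr : r ≠ 0) :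
    HasDerivAt (fun s => s^2 * Upsilon M Q s * deriv (wfull M Q) s)
      (-((4 / r^5) * (3*M*r^3 - (8*M^2 + 4*Q^2)*r^2 + 15*M*Q^2*r - 6*Q^4))) r := by
  have hpoly := (((((hasDerivAt_const r (-2 : ℝ)).add (hasDerivAt_const_div_pow (12*M) 1 hr)).sub
    (hasDerivAt_const_div_pow (16*M^2 + 8*Q^2) 2 hr)).add
    (hasDerivAt_const_div_pow (20*M*Q^2) 3 hr)).sub (hasDerivAt_const_div_pow (6*Q^4) 4 hr))
  have heq : (fun s => s^2 * Upsilon M Q s * deriv (wfull M Q) s) =ᶠ[nhds r]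
      fun s => -2 + 12*M/s^1 - (16*M^2 + 8*Q^2)/s^2 + 20*M*Q^2/s^3 - 6*Q^4/s^4 := by
    filter_upwards [eventually_ne_nhds hr] with s hs using sq_mul_Upsilon_mul_deriv_wfull hs
  refine (hpoly.congr_of_eventuallyEq heq).congr_deriv ?_
  field_simp
  ring

theorem cubic_positive_beyond_rstar (M Q : ℝ) (hM : 0 < M) (hQ : |Q| < M) :
    ∀ r : ℝ, rstar M Q ≤ r →
      (0 < 3*M*r^3 - (8*M^2 + 4*Q^2)*r^2 + 15*M*Q^2*r - 6*Q^4) ∧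
      HasDerivAt (fun s => s^2 * Upsilon M Q s * deriv (wfull M Q) s)
        (-((4 / r^5) * (3*M*r^3 - (8*M^2 + 4*Q^2)*r^2 + 15*M*Q^2*r - 6*Q^4))) r := by
  intro r hr
  have hQM : Q^2 ≤ M^2 := sq_le_sq' (abs_lt.mp hQ).1.le (abs_lt.mp hQ).2.le
  have h3M : 3*M ≤ r := (three_mul_le_rstar hQM).trans hr
  have hr0 : r ≠ 0 := (by linarith : 0 < r).ne'
  exact ⟨cubic_pos_of_three_mul_le hM hQM h3M, hasDerivAt_sq_mul_Upsilon_mul_deriv_wfull M Q hr0⟩
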